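/- Fix n ≥ 2, α ∈ (0,n), and λ ∈ ℝ. Let R : ℝⁿ → ℝⁿ be the reflection across the hyperplane {x : x·e₁ = λ}, i.e. R(x) = x − 2((x·e₁) − λ) e₁. Let E ⊂ ℝⁿ be a bounded Lebesgue measurable set, let Σ = E ∩ {x : x·e₁ < λ}, and suppose the reflected set R(Σ) is contained in E up to a Lebesgue null set. Let G = (E ∩ {x : x·e₁ > λ}) \ R(Σ). If G has positive Lebesgue measure, then for every x ∈ ℝⁿ with x·e₁ < λ one has the strict inequality v_E(R(x)) > v_E(x). -/

import Mathlib

/-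
Let `ρ` be the reflection and split `E` into the `ρ`-invariant part `E ∩ ρ⁻¹E` and the rest
`D = E \ ρ⁻¹E`. As `ρ` is a measure-preserving isometry, `|x - y|^{-α}` and `|ρx - y|^{-α}` have
the same integral over the invariant part. Up to the null set `ρ⁻¹(ρΣ \ E)`, `D` lies in the
half-space `{y·e₁ > λ}`, where `|ρx - y| < |x - y|` whenever `x·e₁ < λ`; and `D ⊇ G` has positive
measure, which makes the inequality strict.
-/

open MeasureTheory Metric Set Bornology

/-- The Riesz potential `v_E(x) = ∫_E |x-y|^{-α} dy` of a set `E ⊆ ℝⁿ`. -/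
noncomputable def rieszPotential {n : ℕ} (α : ℝ) (E : Set (EuclideanSpace ℝ (Fin n)))
    (x : EuclideanSpace ℝ (Fin n)) : ℝ :=
  ∫ y in E, ‖x - y‖ ^ (-α)

open Module

theorem MeasureTheory.setIntegral_lt_setIntegral_of_ae_lt {X : Type*} [MeasurableSpace X]
    {μ : Measure X} {s : Set X} {f g : X → ℝ} (hf : IntegrableOn f s μ) (hg : IntegrableOn g s μ)
    (hs : μ s ≠ 0) (hlt : ∀ᵐ x ∂μ.restrict s, f x < g x) :
    ∫ x in s, f x ∂μ < ∫ x in s, g x ∂μ := by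
  rw [← sub_pos, ← integral_sub hg hf,
    integral_pos_iff_support_of_nonneg_ae (hlt.mono fun x hx => (sub_pos.2 hx).le) (hg.sub hf)]
  have hsupp : (Function.support fun x => g x - f x) =ᵐ[μ.restrict s] univ :=
    Filter.eventuallyEq_univ.2 (hlt.mono fun x hx => (sub_pos.2 hx).ne')
  rwa [measure_congr hsupp, Measure.restrict_apply_univ, pos_iff_ne_zero]

section RieszKernel

variable {F : Type*} [NormedAddCommGroup F] [NormedSpace ℝ F] [FiniteDimensional ℝ F]
  [MeasurableSpace F] [BorelSpace F] {μ : Measure F} [μ.IsAddHaarMeasure]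

theorem integrableOn_norm_sub_rpow_neg (hd : 1 ≤ finrank ℝ F) {α : ℝ}
    (hα : α < finrank ℝ F) (z : F) {s : Set F} (hs : IsBounded s) :
    IntegrableOn (fun y => ‖z - y‖ ^ (-α)) s μ := by
  obtain ⟨r, hr⟩ := hs.subset_ball z
  have h₀ : IntegrableOn (fun y : F => ‖y‖ ^ (-α)) (ball 0 r) μ :=
    integrableOn_ball_of_norm_le_rpow hd hα (C := 1)
      (ae_of_all _ fun y => by simp [abs_of_nonneg (Real.rpow_nonneg (norm_nonneg y) _)])
      (measurable_norm.pow_const _).aestronglyMeasurable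
  have hz := ((measurePreserving_sub_right μ z).integrableOn_comp_preimage
    (Homeomorph.subRight z).measurableEmbedding).2 h₀
  have hball : (· - z) ⁻¹' ball (0 : F) r = ball z r := by ext; simp [dist_eq_norm]
  rw [hball] at hz
  simpa only [Function.comp_def, norm_sub_rev] using hz.mono_set hr

end RieszKernel

section ReflectionHyperplane

variable {F : Type*} [NormedAddCommGroup F] [InnerProductSpace ℝ F] {e : F} {lam : ℝ}

/-- For a unit vector `e`, the reflection across the hyperplane `{x | ⟪x, e⟫ = lam}`. -/
noncomputable def reflectionHyperplane (e : F) (lam : ℝ) : F ≃ᵢ F :=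
  (Submodule.reflection (ℝ ∙ e)ᗮ).toIsometryEquiv.trans (IsometryEquiv.addRight ((2 * lam) • e))

theorem reflectionHyperplane_apply (he : ‖e‖ = 1) (x : F) :
    reflectionHyperplane e lam x = x - (2 * (inner ℝ x e - lam)) • e := by
  simp only [reflectionHyperplane, IsometryEquiv.trans_apply,
    LinearIsometryEquiv.coe_toIsometryEquiv, Submodule.reflection_orthogonal_apply,
    Submodule.reflection_singleton_apply, he, Real.ringHom_apply, one_pow, div_one, neg_sub,
    IsometryEquiv.addRight_apply, real_inner_comm]
  module

theorem inner_reflectionHyperplane (he : ‖e‖ = 1) (x : F) :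
    inner ℝ (reflectionHyperplane e lam x) e = 2 * lam - inner ℝ x e := by
  rw [reflectionHyperplane_apply he, inner_sub_left, real_inner_smul_left,
    real_inner_self_eq_norm_sq, he]
  ring

theorem reflectionHyperplane_involutive (he : ‖e‖ = 1) :
    Function.Involutive (reflectionHyperplane e lam) := fun x => by
  rw [reflectionHyperplane_apply he, inner_reflectionHyperplane he, reflectionHyperplane_apply he]
  module

theorem reflectionHyperplane_eq_self (he : ‖e‖ = 1) {x : F} (hx : inner ℝ x e = lam) :
    reflectionHyperplane e lam x = x := by
  simp [reflectionHyperplane_apply he, hx]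

theorem norm_reflectionHyperplane_sub_lt (he : ‖e‖ = 1) {x y : F}
    (hx : inner ℝ x e < lam) (hy : lam < inner ℝ y e) :
    ‖reflectionHyperplane e lam x - y‖ < ‖x - y‖ := by
  refine lt_of_pow_lt_pow_left₀ 2 (norm_nonneg _) ?_
  rw [reflectionHyperplane_apply he, sub_right_comm, norm_sub_sq_real, real_inner_smul_right,
    inner_sub_left, norm_smul, he, Real.norm_eq_abs, mul_one, sq_abs]
  nlinarith [mul_pos (sub_pos.mpr hx) (sub_pos.mpr hy)]

theorem measurePreserving_reflectionHyperplane [FiniteDimensional ℝ F] [MeasurableSpace F]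
    [BorelSpace F] (e : F) (lam : ℝ) :
    MeasurePreserving (reflectionHyperplane e lam) :=
  (measurePreserving_add_right volume _).comp (Submodule.reflection _).measurePreserving

theorem sdiff_image_reflectionHyperplane_subset (he : ‖e‖ = 1) (E : Set F) :
    (E ∩ {y | lam < inner ℝ y e}) \ reflectionHyperplane e lam '' (E ∩ {y | inner ℝ y e < lam})
      ⊆ E \ reflectionHyperplane e lam ⁻¹' E := by
  rintro y ⟨⟨hyE, hy : lam < inner ℝ y e⟩, hyG⟩
  refine ⟨hyE, fun hRy => hyG ⟨_, ⟨hRy, ?_⟩, reflectionHyperplane_involutive he y⟩⟩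
  show inner ℝ (reflectionHyperplane e lam y) e < lam
  linarith [inner_reflectionHyperplane he (lam := lam) y]

theorem sdiff_preimage_reflectionHyperplane_subset (he : ‖e‖ = 1) (E : Set F) :
    E \ reflectionHyperplane e lam ⁻¹' E ⊆ {y | lam < inner ℝ y e} ∪
      reflectionHyperplane e lam ⁻¹'
        (reflectionHyperplane e lam '' (E ∩ {y | inner ℝ y e < lam}) \ E) := by
  rintro y ⟨hyE, hRy⟩
  rcases lt_trichotomy (inner ℝ y e) lam with h | h | h
  · exact Or.inr ⟨mem_image_of_mem _ ⟨hyE, h⟩, hRy⟩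
  · exact absurd (by rwa [mem_preimage, reflectionHyperplane_eq_self he h]) hRy
  · exact Or.inl h

theorem rpow_neg_norm_sub_lt_rpow_neg_norm_reflectionHyperplane_sub (he : ‖e‖ = 1) {α : ℝ}
    (hα : 0 < α) {x y : F} (hx : inner ℝ x e < lam) (hy : lam < inner ℝ y e)
    (hyx : y ≠ reflectionHyperplane e lam x) :
    ‖x - y‖ ^ (-α) < ‖reflectionHyperplane e lam x - y‖ ^ (-α) :=
  Real.rpow_lt_rpow_of_neg (norm_sub_pos_iff.2 hyx.symm)
    (norm_reflectionHyperplane_sub_lt he hx hy) (neg_neg_of_pos hα)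

end ReflectionHyperplane

theorem IsometryEquiv.setIntegral_dist_apply_eq {X E : Type*} [MetricSpace X] [MeasurableSpace X]
    [BorelSpace X] [NormedAddCommGroup E] [NormedSpace ℝ E] {μ : Measure X} (R : X ≃ᵢ X)
    (hR : MeasurePreserving R μ μ) {S : Set X} (hS : R ⁻¹' S = S) (k : ℝ → E) (x : X) :
    ∫ y in S, k (dist (R x) y) ∂μ = ∫ y in S, k (dist x y) ∂μ :=
  calc ∫ y in S, k (dist (R x) y) ∂μ = ∫ y in R ⁻¹' S, k (dist (R x) (R y)) ∂μ :=
        (hR.setIntegral_preimage_emb R.toHomeomorph.measurableEmbedding _ S).symm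
    _ = ∫ y in S, k (dist x y) ∂μ := by simp_rw [hS, R.dist_eq]

theorem rieszPotential_lt_rieszPotential_reflectionHyperplane {n : ℕ} {α : ℝ} (hα₀ : 0 < α)
    (hα₁ : α < n) {E : Set (EuclideanSpace ℝ (Fin n))} (hE : MeasurableSet E) (hbd : IsBounded E)
    {e : EuclideanSpace ℝ (Fin n)} (he : ‖e‖ = 1) (lam : ℝ)
    (hnull : volume (reflectionHyperplane e lam '' (E ∩ {y | inner ℝ y e < lam}) \ E) = 0)
    (hG : 0 < volume ((E ∩ {y | lam < inner ℝ y e}) \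
      reflectionHyperplane e lam '' (E ∩ {y | inner ℝ y e < lam})))
    {x : EuclideanSpace ℝ (Fin n)} (hx : inner ℝ x e < lam) :
    rieszPotential α E x < rieszPotential α E (reflectionHyperplane e lam x) := by
  set ρ := reflectionHyperplane e lam
  have hd : 1 ≤ finrank ℝ (EuclideanSpace ℝ (Fin n)) := by
    rw [finrank_euclideanSpace_fin]; exact Nat.cast_pos.1 (hα₀.trans hα₁)
  have hint (z : EuclideanSpace ℝ (Fin n)) {s} (hs : s ⊆ E) :
      IntegrableOn (fun y => ‖z - y‖ ^ (-α)) s :=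
    integrableOn_norm_sub_rpow_neg hd (by simpa using hα₁) z (hbd.subset hs)
  have hmeas : MeasurableSet (ρ ⁻¹' E) := ρ.continuous.measurable hE
  have hsymm : ∫ y in E ∩ ρ ⁻¹' E, ‖ρ x - y‖ ^ (-α) = ∫ y in E ∩ ρ ⁻¹' E, ‖x - y‖ ^ (-α) := by
    simp_rw [← dist_eq_norm]
    refine ρ.setIntegral_dist_apply_eq (measurePreserving_reflectionHyperplane e lam) ?_
      (· ^ (-α)) x
    rw [preimage_inter, ← preimage_comp, (reflectionHyperplane_involutive he).comp_self,
      preimage_id, inter_comm]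
  have hpos : volume (E \ ρ ⁻¹' E) ≠ 0 :=
    (hG.trans_le (measure_mono (sdiff_image_reflectionHyperplane_subset he E))).ne'
  have hlt : ∀ᵐ y ∂volume.restrict (E \ ρ ⁻¹' E), ‖x - y‖ ^ (-α) < ‖ρ x - y‖ ^ (-α) := by
    have : Nontrivial (EuclideanSpace ℝ (Fin n)) :=
      nontrivial_of_ne e 0 (norm_ne_zero_iff.1 (by simp [he]))
    have hN :=
      (measurePreserving_reflectionHyperplane e lam).quasiMeasurePreserving.preimage_null hnull
    rw [ae_restrict_iff' (hE.diff hmeas)]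
    -- `y = ρ x` is excluded: there the kernel takes the junk value `0 ^ (-α) = 0`.
    filter_upwards [measure_eq_zero_iff_ae_notMem.1 hN,
      measure_eq_zero_iff_ae_notMem.1 (measure_singleton (ρ x))] with y hyN hyx hyD
    have hy := (sdiff_preimage_reflectionHyperplane_subset he E hyD).resolve_right hyN
    exact rpow_neg_norm_sub_lt_rpow_neg_norm_reflectionHyperplane_sub he hα₀ hx hy hyx
  have hstrict :=
    setIntegral_lt_setIntegral_of_ae_lt (hint x sdiff_subset) (hint (ρ x) sdiff_subset) hpos hlt
  unfold rieszPotential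
  rw [← integral_inter_add_sdiff hmeas (hint x subset_rfl),
    ← integral_inter_add_sdiff hmeas (hint (ρ x) subset_rfl), hsymm]
  exact add_lt_add_right hstrict _

/-- Strict reflection inequality for the Riesz potential: if `E ⊆ ℝⁿ` is bounded measurable,
`R` is reflection across the hyperplane `{x·e₁ = λ}`, `Σ = E ∩ {x·e₁ < λ}`, `R(Σ) ⊆ E` up to a
null set, and `G = (E ∩ {x·e₁ > λ}) \ R(Σ)` has positive measure, then `v_E(R x) > v_E(x)` for
every `x` with `x·e₁ < λ`. -/
theorem rieszPotential_reflection_strict_inequality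
    (n : ℕ) (hn : 2 ≤ n) (α : ℝ) (hα₀ : 0 < α) (hα₁ : α < n) (lam : ℝ)
    (E : Set (EuclideanSpace ℝ (Fin n))) (hE : MeasurableSet E) (hbd : IsBounded E) :
    let e₁ : EuclideanSpace ℝ (Fin n) := EuclideanSpace.single ⟨0, by omega⟩ 1
    let R : EuclideanSpace ℝ (Fin n) → EuclideanSpace ℝ (Fin n) :=
      fun x => x - (2 * ((inner ℝ x e₁ : ℝ) - lam)) • e₁
    let Sig : Set (EuclideanSpace ℝ (Fin n)) :=
      E ∩ {x : EuclideanSpace ℝ (Fin n) | (inner ℝ x e₁ : ℝ) < lam}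
    volume (R '' Sig \ E) = 0 →
    let G : Set (EuclideanSpace ℝ (Fin n)) :=
      (E ∩ {x : EuclideanSpace ℝ (Fin n) | lam < (inner ℝ x e₁ : ℝ)}) \ (R '' Sig)
    0 < volume G →
    ∀ x : EuclideanSpace ℝ (Fin n), (inner ℝ x e₁ : ℝ) < lam →
      rieszPotential α E x < rieszPotential α E (R x) := by
  intro e₁ R
  have he : ‖e₁‖ = 1 := by simp [e₁]
  have hR : ⇑(reflectionHyperplane e₁ lam) = R := funext (reflectionHyperplane_apply he)
  have key := rieszPotential_lt_rieszPotential_reflectionHyperplane hα₀ hα₁ hE hbd he lam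
  rw [hR] at key
  exact key
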